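/- Let r ≥ 2 be an integer and let (S₁, S₂) be an Euler pair of order r, i.e., rS₁ ⊆ S₁ and S₂ = S₁ \ rS₁. Then for all non-negative integers n and j, |Õ_{j,r}(n)| = |D̃_{j,r}(n)|. -/

import Mathlib

open Finset

/-- `rS`: the set `{r·s : s ∈ S}` of `r`-fold multiples of elements of `S`. -/
def rSet (r : ℕ) (S : Set ℕ) : Set ℕ := (fun s => r * s) '' S

/-- `Õ_{j,r}(n)`: partitions of `n` with exactly `j` different parts from `rS₁` and all
other parts from `S₂`. -/
noncomputable def setOt (S1 S2 : Set ℕ) (j r n : ℕ) : Finset (Nat.Partition n) :=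
  letI := Classical.propDecidable
  Finset.univ.filter fun p =>
    (p.parts.toFinset.filter fun i => i ∈ rSet r S1).card = j ∧
      ∀ i ∈ p.parts.toFinset, i ∉ rSet r S1 → i ∈ S2

/-- `D̃_{j,r}(n)`: partitions of `n` with all parts in `S₁` and exactly `j` different parts
repeated at least `r` times (all other parts appearing at most `r - 1` times). -/
noncomputable def setDt (S1 : Set ℕ) (j r n : ℕ) : Finset (Nat.Partition n) :=
  letI := Classical.propDecidable
  Finset.univ.filter fun p =>
    (∀ i ∈ p.parts, i ∈ S1) ∧
      (p.parts.toFinset.filter fun i => r ≤ p.parts.count i).card = j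

/-- `Õ_{≤j,r}(n)`: partitions of `n` with at most `j` different parts from `rS₁` and all
other parts from `S₂`. -/
noncomputable def setOtLe (S1 S2 : Set ℕ) (j r n : ℕ) : Finset (Nat.Partition n) :=
  letI := Classical.propDecidable
  Finset.univ.filter fun p =>
    (p.parts.toFinset.filter fun i => i ∈ rSet r S1).card ≤ j ∧
      ∀ i ∈ p.parts.toFinset, i ∉ rSet r S1 → i ∈ S2

/-- `D̃_{≤j,r}(n)`: partitions of `n` with all parts in `S₁` and at most `j` different parts
repeated at least `r` times. -/
noncomputable def setDtLe (S1 : Set ℕ) (j r n : ℕ) : Finset (Nat.Partition n) :=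
  letI := Classical.propDecidable
  Finset.univ.filter fun p =>
    (∀ i ∈ p.parts, i ∈ S1) ∧
      (p.parts.toFinset.filter fun i => r ≤ p.parts.count i).card ≤ j

/-- The number of parts of a partition. -/
def numParts {n : ℕ} (p : Nat.Partition n) : ℕ := Multiset.card p.parts

/-- The number of different parts of a partition. -/
def numDistinctParts {n : ℕ} (p : Nat.Partition n) : ℕ := p.parts.toFinset.card

/-- `b̃_{j,r}(n)`: the difference between the number of parts in all partitions in
`Õ_{j,r}(n)` and the number of parts in all partitions in `D̃_{j,r}(n)`. -/
noncomputable def bDifft (S1 S2 : Set ℕ) (j r n : ℕ) : ℤ :=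
  (∑ p ∈ setOt S1 S2 j r n, (numParts p : ℤ)) - ∑ p ∈ setDt S1 j r n, (numParts p : ℤ)

/-- `b̃_{≤j,r}(n)`. -/
noncomputable def bDifftLe (S1 S2 : Set ℕ) (j r n : ℕ) : ℤ :=
  (∑ p ∈ setOtLe S1 S2 j r n, (numParts p : ℤ)) - ∑ p ∈ setDtLe S1 j r n, (numParts p : ℤ)

/-- `b̃'_{j,r}(n)`: the difference between the number of different parts in all partitions
in `D̃_{j,r}(n)` and the number of different parts in all partitions in `Õ_{j,r}(n)`. -/
noncomputable def bDifft' (S1 S2 : Set ℕ) (j r n : ℕ) : ℤ :=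
  (∑ p ∈ setDt S1 j r n, (numDistinctParts p : ℤ)) -
    ∑ p ∈ setOt S1 S2 j r n, (numDistinctParts p : ℤ)

/-- `b̃'_{≤j,r}(n)`. -/
noncomputable def bDifftLe' (S1 S2 : Set ℕ) (j r n : ℕ) : ℤ :=
  (∑ p ∈ setDtLe S1 j r n, (numDistinctParts p : ℤ)) -
    ∑ p ∈ setOtLe S1 S2 j r n, (numDistinctParts p : ℤ)

/-- `T̃_{j,r}(n)`: the number of different parts with multiplicity between `r + 1` and
`2r - 1` in all partitions in `D̃_{j,r}(n)`. -/
noncomputable def Tcountt (S1 : Set ℕ) (j r n : ℕ) : ℕ :=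
  ∑ p ∈ setDt S1 j r n,
    (p.parts.toFinset.filter fun i =>
      r + 1 ≤ p.parts.count i ∧ p.parts.count i ≤ 2 * r - 1).card

/-- `(S₁, S₂)` is an Euler pair of order `r` if `rS₁ ⊆ S₁` and `S₂ = S₁ \ rS₁`. -/
def IsEulerPair (r : ℕ) (S1 S2 : Set ℕ) : Prop :=
  rSet r S1 ⊆ S1 ∧ S2 = S1 \ rSet r S1

/-
Glaisher's bijection. As rS₁ ⊆ S₁, the set S₁ is the disjoint union of rS₁ and S₂, so both kinds
of partitions have all their parts in S₁, and every m ∈ S₁ is uniquely r^k·s with s ∈ S₂.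
If m occurs c = q·r + t times (t < r), replace these parts by q copies of r·m and t·r^k copies
of s: the parts repeated at least r times turn into exactly the different parts from rS₁.
Conversely, x ∈ rS₁ occurring c times gives r·c copies of x / r, and s ∈ S₂ occurring c times
gives d_k copies of r^k·s, where d_k is the k-th base-r digit of c. Uniqueness of base-r
expansions makes the two maps mutually inverse.
-/

namespace Nat

theorem sum_range_div_pow_mod_mul_pow (b x K : ℕ) :
    ∑ k ∈ range K, x / b ^ k % b * b ^ k = x % b ^ K := by
  induction K with
  | zero => simp [Nat.mod_one]
  | succ K ih => rw [sum_range_succ, ih, Nat.mod_pow_succ, mul_comm (b ^ K)]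

theorem eq_of_forall_div_pow_mod_eq {b x y : ℕ} (hb : 1 < b)
    (h : ∀ k, x / b ^ k % b = y / b ^ k % b) : x = y := by
  calc x = x % b ^ (x + y) :=
        (Nat.mod_eq_of_lt ((x.le_add_right y).trans_lt (Nat.lt_pow_self hb))).symm
    _ = y % b ^ (x + y) := by simp_rw [← sum_range_div_pow_mod_mul_pow, h]
    _ = y := Nat.mod_eq_of_lt ((y.le_add_left x).trans_lt (Nat.lt_pow_self hb))

theorem sum_mul_pow_lt {b k : ℕ} (hb : 0 < b) {J : Finset ℕ} {d : ℕ → ℕ}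
    (hd : ∀ j ∈ J, d j < b) (hJ : ∀ j ∈ J, j < k) : ∑ j ∈ J, d j * b ^ j < b ^ k :=
  calc ∑ j ∈ J, d j * b ^ j ≤ ∑ j ∈ J, b ^ j * (b - 1) :=
        sum_le_sum fun j hj => by
          rw [mul_comm]; exact Nat.mul_le_mul_left _ (Nat.le_sub_one_of_lt (hd j hj))
    _ ≤ ∑ j ∈ range k, b ^ j * (b - 1) :=
        sum_le_sum_of_subset fun j hj => mem_range.2 (hJ j hj)
    _ = b ^ k - 1 := by rw [← sum_mul, geom_sum_mul_of_one_le hb]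
    _ < b ^ k := Nat.sub_lt (pow_pos hb k) one_pos

theorem sum_mul_pow_div_pow_mod {b : ℕ} (hb : 0 < b) {J : Finset ℕ} {d : ℕ → ℕ}
    (hd : ∀ j ∈ J, d j < b) (k : ℕ) :
    (∑ j ∈ J, d j * b ^ j) / b ^ k % b = if k ∈ J then d k else 0 := by
  obtain ⟨high, hhigh⟩ : b ^ (k + 1) ∣ ∑ j ∈ J with k < j, d j * b ^ j :=
    dvd_sum fun j hj => Dvd.dvd.mul_left (pow_dvd_pow b (mem_filter.1 hj).2) _
  have hmid : ∑ j ∈ J with j = k, d j * b ^ j = (if k ∈ J then d k else 0) * b ^ k := by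
    rw [sum_filter, sum_ite_eq', ite_mul, zero_mul]
  have hsplit : ∑ j ∈ J, d j * b ^ j = ∑ j ∈ J with j < k, d j * b ^ j +
      b ^ k * ((if k ∈ J then d k else 0) + b * high) := by
    rw [mul_add, ← mul_assoc, ← pow_succ, ← hhigh, mul_comm, ← hmid]
    simp only [sum_filter, ← sum_add_distrib]
    refine sum_congr rfl fun j _ => ?_
    split_ifs <;> omega
  have hlow : ∑ j ∈ J with j < k, d j * b ^ j < b ^ k :=
    sum_mul_pow_lt hb (fun j hj => hd j (mem_filter.1 hj).1) fun j hj => (mem_filter.1 hj).2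
  have hdigit : (if k ∈ J then d k else 0) < b := by split_ifs with h; exacts [hd k h, hb]
  rw [hsplit, Nat.add_mul_div_left _ _ (pow_pos hb k), Nat.div_eq_of_lt hlow, zero_add,
    Nat.add_mul_mod_self_left, Nat.mod_eq_of_lt hdigit]

end Nat

namespace Multiset

variable {α β : Type*} {T : Finset α} {a : α → ℕ} {f : α → β}

theorem exists_eq_of_mem_sum_replicate {y : β} (hy : y ∈ ∑ i ∈ T, replicate (a i) (f i)) :
    ∃ i ∈ T, f i = y := by
  obtain ⟨i, hi, hy⟩ := mem_sum.1 hy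
  exact ⟨i, hi, (eq_of_mem_replicate hy).symm⟩

theorem sum_finset_sum {γ : Type*} [AddCommMonoid γ] (g : α → Multiset γ) :
    (∑ i ∈ T, g i).sum = ∑ i ∈ T, (g i).sum :=
  map_sum sumAddMonoidHom g T

variable [DecidableEq β]

theorem count_sum_replicate (y : β) :
    count y (∑ i ∈ T, replicate (a i) (f i)) = ∑ i ∈ T with f i = y, a i := by
  simp only [count_sum', count_replicate, sum_filter]

theorem count_sum_replicate_eq_zero {y : β} (hy : ∀ i ∈ T, f i ≠ y) :
    count y (∑ i ∈ T, replicate (a i) (f i)) = 0 := by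
  rw [count_sum_replicate, filter_false_of_mem hy, sum_empty]

theorem count_sum_replicate_of_injOn {i : α} {y : β} (hy : f i = y)
    (hf : ∀ i' ∈ T, f i' = y → i' = i) (ha : i ∉ T → a i = 0) :
    count y (∑ i' ∈ T, replicate (a i') (f i')) = a i := by
  subst hy
  rw [count_sum_replicate, sum_filter]
  by_cases hi : i ∈ T
  · rw [Finset.sum_eq_single_of_mem i hi fun i' hi' hne => if_neg (hne ∘ hf i' hi'), if_pos rfl]
  · rw [ha hi]
    exact Finset.sum_eq_zero fun i' hi' => if_neg fun h => hi (hf i' hi' h ▸ hi')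

end Multiset

theorem Nat.Partition.card_filter_eq_of_invOn {n : ℕ} {P Q : Multiset ℕ → Prop}
    [DecidablePred P] [DecidablePred Q] {f g : Multiset ℕ → Multiset ℕ}
    (hP : ∀ M, P M → ∀ x ∈ M, 0 < x) (hQ : ∀ N, Q N → ∀ x ∈ N, 0 < x)
    (hf : Set.MapsTo f {M | P M} {N | Q N}) (hg : Set.MapsTo g {N | Q N} {M | P M})
    (hfg : Set.InvOn g f {M | P M} {N | Q N}) (hsum : ∀ M, P M → (f M).sum = M.sum) :
    #{p : n.Partition | P p.parts} = #{q : n.Partition | Q q.parts} := by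
  have hsum' : ∀ N, Q N → (g N).sum = N.sum := fun N hN => by
    rw [← hsum _ (hg hN), hfg.2 hN]
  refine card_bij'
    (fun p hp => ⟨f p.parts, fun hx => hQ _ (hf (mem_filter.1 hp).2) _ hx,
      by rw [hsum _ (mem_filter.1 hp).2, p.parts_sum]⟩)
    (fun q hq => ⟨g q.parts, fun hx => hP _ (hg (mem_filter.1 hq).2) _ hx,
      by rw [hsum' _ (mem_filter.1 hq).2, q.parts_sum]⟩) ?_ ?_ ?_ ?_
  · exact fun p hp => mem_filter.2 ⟨mem_univ _, hf (mem_filter.1 hp).2⟩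
  · exact fun q hq => mem_filter.2 ⟨mem_univ _, hg (mem_filter.1 hq).2⟩
  · exact fun p hp => Nat.Partition.ext (hfg.1 (mem_filter.1 hp).2)
  · exact fun q hq => Nat.Partition.ext (hfg.2 (mem_filter.1 hq).2)

open Classical in
noncomputable def eulerDecomp (r : ℕ) (S2 : Set ℕ) (m : ℕ) : ℕ × ℕ :=
  if h : ∃ p : ℕ × ℕ, p.2 ∈ S2 ∧ r ^ p.1 * p.2 = m then h.choose else (0, m)

noncomputable def glaisher (r : ℕ) (S2 : Set ℕ) (M : Multiset ℕ) : Multiset ℕ :=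
  (∑ m ∈ M.toFinset, Multiset.replicate (M.count m / r) (r * m)) +
    ∑ m ∈ M.toFinset,
      Multiset.replicate (M.count m % r * r ^ (eulerDecomp r S2 m).1) (eulerDecomp r S2 m).2

-- `N.count s ≤ N.card`, so `range (N.card + 1)` holds every nonzero base-`r` digit of `N.count s`.
open Classical in
noncomputable def glaisherInv (r : ℕ) (S1 S2 : Set ℕ) (N : Multiset ℕ) : Multiset ℕ :=
  (∑ x ∈ N.toFinset with x ∈ rSet r S1, Multiset.replicate (r * N.count x) (x / r)) +
    ∑ p ∈ {s ∈ N.toFinset | s ∈ S2} ×ˢ range (N.card + 1),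
      Multiset.replicate (N.count p.1 / r ^ p.2 % r) (r ^ p.2 * p.1)

namespace IsEulerPair

variable {r : ℕ} {S1 S2 : Set ℕ}

theorem subset (hp : IsEulerPair r S1 S2) : S2 ⊆ S1 := hp.2 ▸ Set.sdiff_subset

theorem notMem_rSet (hp : IsEulerPair r S1 S2) {s : ℕ} (hs : s ∈ S2) : s ∉ rSet r S1 :=
  (hp.2 ▸ hs).2

theorem mem_iff (hp : IsEulerPair r S1 S2) {x : ℕ} : x ∈ S1 ↔ x ∈ rSet r S1 ∨ x ∈ S2 := by
  rw [hp.2]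
  by_cases hx : x ∈ rSet r S1
  · simp [hx, hp.1 hx]
  · simp [hx]

theorem mul_mem (hp : IsEulerPair r S1 S2) {m : ℕ} (hm : m ∈ S1) : r * m ∈ S1 :=
  hp.1 ⟨m, hm, rfl⟩

theorem pow_mul_mem (hp : IsEulerPair r S1 S2) {m : ℕ} (hm : m ∈ S1) (k : ℕ) :
    r ^ k * m ∈ S1 := by
  induction k with
  | zero => simpa using hm
  | succ k ih => simpa [pow_succ', mul_assoc] using hp.mul_mem ih

theorem exists_pow_mul_eq (hp : IsEulerPair r S1 S2) (hr : 2 ≤ r) (hS1 : ∀ s ∈ S1, 0 < s)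
    {m : ℕ} (hm : m ∈ S1) : ∃ k, ∃ s ∈ S2, r ^ k * s = m := by
  induction m using Nat.strong_induction_on with
  | _ m ih =>
    by_cases hmr : m ∈ rSet r S1
    · obtain ⟨m', hm', rfl⟩ := hmr
      obtain ⟨k, s, hs, rfl⟩ := ih m' (by nlinarith [hS1 m' hm']) hm'
      exact ⟨k + 1, s, hs, by ring⟩
    · exact ⟨0, m, hp.mem_iff.1 hm |>.resolve_left hmr, by simp⟩

theorem eq_of_pow_mul_eq (hp : IsEulerPair r S1 S2) (hr : 0 < r) {k k' s s' : ℕ}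
    (hs : s ∈ S2) (hs' : s' ∈ S2) (h : r ^ k * s = r ^ k' * s') : k = k' ∧ s = s' := by
  wlog hle : k ≤ k' generalizing k k' s s'
  · exact (this hs' hs h.symm (by omega)).imp Eq.symm Eq.symm
  obtain ⟨i, rfl⟩ := Nat.exists_eq_add_of_le hle
  rw [pow_add, mul_assoc] at h
  have hs_eq : s = r ^ i * s' := Nat.eq_of_mul_eq_mul_left (pow_pos hr k) h
  rcases i with _ | i
  · simpa using hs_eq
  · exact absurd ⟨r ^ i * s', hp.pow_mul_mem (hp.subset hs') i, by rw [hs_eq]; ring⟩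
      (hp.notMem_rSet hs)

theorem eulerDecomp_spec (hp : IsEulerPair r S1 S2) (hr : 2 ≤ r) (hS1 : ∀ s ∈ S1, 0 < s)
    {m : ℕ} (hm : m ∈ S1) :
    (eulerDecomp r S2 m).2 ∈ S2 ∧ r ^ (eulerDecomp r S2 m).1 * (eulerDecomp r S2 m).2 = m := by
  obtain ⟨k, s, hs, hks⟩ := hp.exists_pow_mul_eq hr hS1 hm
  have h : ∃ p : ℕ × ℕ, p.2 ∈ S2 ∧ r ^ p.1 * p.2 = m := ⟨(k, s), hs, hks⟩
  rw [eulerDecomp, dif_pos h]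
  exact h.choose_spec

theorem eulerDecomp_pow_mul (hp : IsEulerPair r S1 S2) (hr : 0 < r) {s : ℕ} (hs : s ∈ S2)
    (k : ℕ) : eulerDecomp r S2 (r ^ k * s) = (k, s) := by
  have h : ∃ p : ℕ × ℕ, p.2 ∈ S2 ∧ r ^ p.1 * p.2 = r ^ k * s := ⟨(k, s), hs, rfl⟩
  rw [eulerDecomp, dif_pos h]
  obtain ⟨hk, hs⟩ := hp.eq_of_pow_mul_eq hr h.choose_spec.1 hs h.choose_spec.2
  exact Prod.ext hk hs

theorem count_glaisher_mul (hp : IsEulerPair r S1 S2) (hr : 2 ≤ r) (hS1 : ∀ s ∈ S1, 0 < s)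
    {M : Multiset ℕ} (hM : ∀ m ∈ M, m ∈ S1) {x : ℕ} (hx : x ∈ S1) :
    Multiset.count (r * x) (glaisher r S2 M) = M.count x / r := by
  have hsplit : ∀ m ∈ M.toFinset, (eulerDecomp r S2 m).2 ≠ r * x := fun m hm h => by
    have hS2 := (hp.eulerDecomp_spec hr hS1 (hM m (Multiset.mem_toFinset.1 hm))).1
    rw [h] at hS2
    exact hp.notMem_rSet hS2 ⟨x, hx, rfl⟩
  rw [glaisher, Multiset.count_add, Multiset.count_sum_replicate_eq_zero hsplit, add_zero,
    Multiset.count_sum_replicate_of_injOn (f := (r * ·)) rfl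
      (fun m _ h => Nat.eq_of_mul_eq_mul_left (by omega) h)]
  intro hxM
  rw [Multiset.count_eq_zero.2 (mt Multiset.mem_toFinset.2 hxM), Nat.zero_div]

theorem count_glaisher_div_pow_mod (hp : IsEulerPair r S1 S2) (hr : 2 ≤ r)
    (hS1 : ∀ s ∈ S1, 0 < s) {M : Multiset ℕ} (hM : ∀ m ∈ M, m ∈ S1) {s : ℕ} (hs : s ∈ S2)
    (k : ℕ) : Multiset.count s (glaisher r S2 M) / r ^ k % r = M.count (r ^ k * s) % r := by
  set T := {m ∈ M.toFinset | (eulerDecomp r S2 m).2 = s}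
  have hT : ∀ m ∈ T, r ^ (eulerDecomp r S2 m).1 * s = m := fun m hm => by
    obtain ⟨hmM, hms⟩ := mem_filter.1 hm
    simpa [hms] using (hp.eulerDecomp_spec hr hS1 (hM m (Multiset.mem_toFinset.1 hmM))).2
  have hcount : Multiset.count s (glaisher r S2 M) =
      ∑ i ∈ T.image fun m => (eulerDecomp r S2 m).1, M.count (r ^ i * s) % r * r ^ i := by
    have hnot : ∀ m ∈ M.toFinset, r * m ≠ s := fun m hm h =>
      hp.notMem_rSet hs ⟨m, hM m (Multiset.mem_toFinset.1 hm), h⟩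
    rw [glaisher, Multiset.count_add, Multiset.count_sum_replicate_eq_zero hnot, zero_add,
      Multiset.count_sum_replicate, sum_image fun m hm m' hm' h => by
        rw [← hT m hm, ← hT m' hm', h]]
    exact sum_congr rfl fun m hm => by rw [hT m hm]
  rw [hcount, Nat.sum_mul_pow_div_pow_mod (by omega) fun _ _ => Nat.mod_lt _ (by omega)]
  split_ifs with hk
  · rfl
  · have hdecomp := hp.eulerDecomp_pow_mul (by omega) hs k
    have hnot : r ^ k * s ∉ M := fun hmem =>
      hk (mem_image.2 ⟨r ^ k * s, by simp [T, hmem, hdecomp], by simp [hdecomp]⟩)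
    rw [Multiset.count_eq_zero.2 hnot, Nat.zero_mod]

theorem count_glaisherInv (hp : IsEulerPair r S1 S2) (hr : 2 ≤ r) {N : Multiset ℕ} {s : ℕ}
    (hs : s ∈ S2) (k : ℕ) :
    Multiset.count (r ^ k * s) (glaisherInv r S1 S2 N) =
      r * N.count (r * (r ^ k * s)) + N.count s / r ^ k % r := by
  classical
  have hr0 : 0 < r := by omega
  rw [glaisherInv, Multiset.count_add]
  congr 1
  · refine Multiset.count_sum_replicate_of_injOn (Nat.mul_div_cancel_left _ hr0) ?_ ?_
    · intro x hx h
      obtain ⟨u, -, rfl⟩ := (mem_filter.1 hx).2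
      rw [← h, Nat.mul_div_cancel_left _ hr0]
    · intro hnot
      rw [Multiset.count_eq_zero.2 fun hmem => hnot (mem_filter.2
        ⟨Multiset.mem_toFinset.2 hmem, _, hp.pow_mul_mem (hp.subset hs) k, rfl⟩), mul_zero]
  · refine Multiset.count_sum_replicate_of_injOn (i := (s, k)) rfl ?_ ?_
    · rintro ⟨s', k'⟩ hmem h
      have hs' : s' ∈ S2 := (mem_filter.1 (mem_product.1 hmem).1).2
      obtain ⟨rfl, rfl⟩ := hp.eq_of_pow_mul_eq hr0 hs' hs h
      rfl
    · intro hnot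
      by_cases hsN : s ∈ N
      · have hk : N.card < k := by
          simpa [mem_product, hsN, hs] using hnot
        have hlt : N.count s < r ^ k :=
          (N.count_le_card s).trans_lt (hk.trans (Nat.lt_pow_self hr))
        rw [Nat.div_eq_of_lt hlt, Nat.zero_mod]
      · rw [Multiset.count_eq_zero.2 hsN, Nat.zero_div, Nat.zero_mod]

theorem mem_glaisher (hp : IsEulerPair r S1 S2) (hr : 2 ≤ r) (hS1 : ∀ s ∈ S1, 0 < s)
    {M : Multiset ℕ} (hM : ∀ m ∈ M, m ∈ S1) {y : ℕ} (hy : y ∈ glaisher r S2 M) : y ∈ S1 := by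
  rcases Multiset.mem_add.1 hy with hy | hy <;>
    obtain ⟨m, hm, rfl⟩ := Multiset.exists_eq_of_mem_sum_replicate hy
  · exact hp.mul_mem (hM m (Multiset.mem_toFinset.1 hm))
  · exact hp.subset (hp.eulerDecomp_spec hr hS1 (hM m (Multiset.mem_toFinset.1 hm))).1

theorem mem_glaisherInv (hp : IsEulerPair r S1 S2) (hr : 0 < r) {N : Multiset ℕ} {y : ℕ}
    (hy : y ∈ glaisherInv r S1 S2 N) : y ∈ S1 := by
  classical
  rcases Multiset.mem_add.1 hy with hy | hy <;>
    obtain ⟨x, hx, rfl⟩ := Multiset.exists_eq_of_mem_sum_replicate hy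
  · obtain ⟨u, hu, rfl⟩ := (mem_filter.1 hx).2
    rwa [Nat.mul_div_cancel_left _ hr]
  · exact hp.pow_mul_mem (hp.subset (mem_filter.1 (mem_product.1 hx).1).2) _

theorem sum_glaisher (hp : IsEulerPair r S1 S2) (hr : 2 ≤ r) (hS1 : ∀ s ∈ S1, 0 < s)
    {M : Multiset ℕ} (hM : ∀ m ∈ M, m ∈ S1) : (glaisher r S2 M).sum = M.sum := by
  rw [glaisher, Multiset.sum_add, Multiset.sum_finset_sum, Multiset.sum_finset_sum,
    ← sum_add_distrib, Finset.sum_multiset_count M]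
  refine sum_congr rfl fun m hm => ?_
  have hkm := (hp.eulerDecomp_spec hr hS1 (hM m (Multiset.mem_toFinset.1 hm))).2
  simp only [Multiset.sum_replicate, smul_eq_mul]
  rw [mul_assoc (_ % r), hkm]
  conv_rhs => rw [← Nat.div_add_mod (M.count m) r]
  ring

theorem glaisherInv_glaisher (hp : IsEulerPair r S1 S2) (hr : 2 ≤ r) (hS1 : ∀ s ∈ S1, 0 < s)
    {M : Multiset ℕ} (hM : ∀ m ∈ M, m ∈ S1) : glaisherInv r S1 S2 (glaisher r S2 M) = M := by
  ext m
  by_cases hm : m ∈ S1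
  · obtain ⟨k, s, hs, rfl⟩ := hp.exists_pow_mul_eq hr hS1 hm
    rw [hp.count_glaisherInv hr hs, hp.count_glaisher_mul hr hS1 hM hm,
      hp.count_glaisher_div_pow_mod hr hS1 hM hs, Nat.div_add_mod]
  · rw [Multiset.count_eq_zero.2 (mt (hp.mem_glaisherInv (by omega)) hm),
      Multiset.count_eq_zero.2 (mt (hM m) hm)]

theorem glaisher_glaisherInv (hp : IsEulerPair r S1 S2) (hr : 2 ≤ r) (hS1 : ∀ s ∈ S1, 0 < s)
    {N : Multiset ℕ} (hN : ∀ x ∈ N, x ∈ S1) : glaisher r S2 (glaisherInv r S1 S2 N) = N := by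
  have hr0 : 0 < r := by omega
  have hψ : ∀ m ∈ glaisherInv r S1 S2 N, m ∈ S1 := fun m => hp.mem_glaisherInv hr0
  ext y
  by_cases hy : y ∈ S1
  · rcases hp.mem_iff.1 hy with ⟨x, hx, rfl⟩ | hyS2
    · obtain ⟨k, s, hs, rfl⟩ := hp.exists_pow_mul_eq hr hS1 hx
      have hdigit := Nat.mod_lt (N.count s / r ^ k) hr0
      rw [hp.count_glaisher_mul hr hS1 hψ hx, hp.count_glaisherInv hr hs,
        Nat.mul_add_div hr0, Nat.div_eq_of_lt hdigit, add_zero]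
    · refine Nat.eq_of_forall_div_pow_mod_eq hr fun k => ?_
      rw [hp.count_glaisher_div_pow_mod hr hS1 hψ hyS2, hp.count_glaisherInv hr hyS2,
        Nat.mul_add_mod, Nat.mod_mod]
  · rw [Multiset.count_eq_zero.2 (mt (hp.mem_glaisher hr hS1 hψ) hy),
      Multiset.count_eq_zero.2 (mt (hN y) hy)]

open Classical in
theorem card_filter_rSet_glaisher (hp : IsEulerPair r S1 S2) (hr : 2 ≤ r)
    (hS1 : ∀ s ∈ S1, 0 < s) {M : Multiset ℕ} (hM : ∀ m ∈ M, m ∈ S1) :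
    #{y ∈ (glaisher r S2 M).toFinset | y ∈ rSet r S1} = #{m ∈ M.toFinset | r ≤ M.count m} := by
  have hr0 : 0 < r := by omega
  rw [eq_comm, ← card_image_of_injective _ (mul_right_injective₀ hr0.ne')]
  congr 1
  ext y
  simp only [mem_filter, Multiset.mem_toFinset, mem_image]
  constructor
  · rintro ⟨m, ⟨hm, hrm⟩, rfl⟩
    refine ⟨?_, m, hM m hm, rfl⟩
    rw [← Multiset.count_pos, hp.count_glaisher_mul hr hS1 hM (hM m hm)]
    exact Nat.div_pos hrm hr0
  · rintro ⟨hy, x, hx, rfl⟩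
    rw [← Multiset.count_pos, hp.count_glaisher_mul hr hS1 hM hx, Nat.div_pos_iff] at hy
    exact ⟨x, ⟨Multiset.count_pos.1 (by omega), hy.2⟩, rfl⟩

open Classical in
theorem card_filter_count_glaisherInv (hp : IsEulerPair r S1 S2) (hr : 2 ≤ r)
    (hS1 : ∀ s ∈ S1, 0 < s) {N : Multiset ℕ} (hN : ∀ x ∈ N, x ∈ S1) :
    #{m ∈ (glaisherInv r S1 S2 N).toFinset | r ≤ (glaisherInv r S1 S2 N).count m} =
      #{y ∈ N.toFinset | y ∈ rSet r S1} := by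
  rw [← hp.card_filter_rSet_glaisher hr hS1 fun y => hp.mem_glaisherInv (by omega),
    hp.glaisher_glaisherInv hr hS1 hN]

open Classical in
theorem setOt_eq (hp : IsEulerPair r S1 S2) (j n : ℕ) :
    setOt S1 S2 j r n = ({p | (∀ x ∈ p.parts, x ∈ S1) ∧
      #{y ∈ p.parts.toFinset | y ∈ rSet r S1} = j} : Finset n.Partition) := by
  ext p
  simp only [setOt, mem_filter, mem_univ, true_and, Multiset.mem_toFinset]
  rw [and_comm]
  -- `setOt` builds `toFinset` with a classical `DecidableEq ℕ` instance
  refine and_congr ⟨fun h x hx => hp.mem_iff.2 ((Classical.em _).imp_right (h x hx)),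
    fun h x hx hx' => (hp.mem_iff.1 (h x hx)).resolve_left hx'⟩ ?_
  convert Iff.rfl

end IsEulerPair

open Classical in
theorem setDt_eq (S1 : Set ℕ) (j r n : ℕ) :
    setDt S1 j r n = ({p | (∀ x ∈ p.parts, x ∈ S1) ∧
      #{m ∈ p.parts.toFinset | r ≤ p.parts.count m} = j} : Finset n.Partition) := by
  ext p
  simp only [setDt, mem_filter, mem_univ, true_and]
  convert Iff.rfl

theorem euler_pair_franklin_general (r : ℕ) (hr : 2 ≤ r) (S1 S2 : Set ℕ)
    (hS1 : ∀ s ∈ S1, 0 < s)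
    (hpair : IsEulerPair r S1 S2) (n j : ℕ) :
    (setOt S1 S2 j r n).card = (setDt S1 j r n).card := by
  classical
  rw [hpair.setOt_eq, setDt_eq, eq_comm]
  apply Nat.Partition.card_filter_eq_of_invOn (f := glaisher r S2) (g := glaisherInv r S1 S2)
    (P := fun M => (∀ x ∈ M, x ∈ S1) ∧ #{m ∈ M.toFinset | r ≤ M.count m} = j)
    (Q := fun N => (∀ x ∈ N, x ∈ S1) ∧ #{y ∈ N.toFinset | y ∈ rSet r S1} = j)
  case hP => exact fun M hM x hx => hS1 x (hM.1 x hx)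
  case hQ => exact fun N hN x hx => hS1 x (hN.1 x hx)
  case hf =>
    rintro M ⟨hM, rfl⟩
    exact ⟨fun y => hpair.mem_glaisher hr hS1 hM, hpair.card_filter_rSet_glaisher hr hS1 hM⟩
  case hg =>
    rintro N ⟨hN, rfl⟩
    exact ⟨fun y => hpair.mem_glaisherInv (by omega), hpair.card_filter_count_glaisherInv hr hS1 hN⟩
  case hfg =>
    exact ⟨fun M hM => hpair.glaisherInv_glaisher hr hS1 hM.1,
      fun N hN => hpair.glaisher_glaisherInv hr hS1 hN.1⟩
  case hsum => exact fun M hM => hpair.sum_glaisher hr hS1 hM.1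

/-- For an Euler pair `(S₁, S₂)` of order `r`, `|Õ_{j,r}(n)| = |D̃_{j,r}(n)|`. -/
theorem euler_pair_franklin (r : ℕ) (hr : 2 ≤ r) (S1 S2 : Set ℕ)
    (hS1 : ∀ s ∈ S1, 0 < s) (hS2 : ∀ s ∈ S2, 0 < s)
    (hpair : IsEulerPair r S1 S2) (n j : ℕ) :
    (setOt S1 S2 j r n).card = (setDt S1 j r n).card :=
  euler_pair_franklin_general r hr S1 S2 hS1 hpair n j
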